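/- arXiv:1510.09073 — 2 statements merged into one kernel-verified Lean document; each statement's English description precedes it below -/
import Mathlib

section
/- Deterministic autocratic strategies: Let S_X and S_Y be measurable spaces with bounded measurable payoff functions u_X, u_Y : S_X × S_Y → ℝ, let λ ∈ (0,1), let α, β, γ ∈ ℝ, let r : S_X × S_Y → S_X be a measurable reaction function, let x_0 ∈ S_X, and let ψ : S_X → ℝ be a bounded measurable function. Suppose that for every x ∈ S_X and y ∈ S_Y: α·u_X(x,y) + β·u_Y(x,y) + γ = ψ(x) − λ·ψ(r(x,y)) − (1−λ)·ψ(x_0). Then the memory-one strategy σ_X[x,y] = δ_{r(x,y)} with initial action σ_X^0 = δ_{x_0} satisfies: for every play sequence (ν_t)_{t≥0} compatible with (σ_X^0, σ_X), α·π_X + β·π_Y + γ = 0. -/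
open MeasureTheory ProbabilityTheory

/-! Writing `g x = ψ x - ψ x₀`, the hypothesis reads `α u_X + β u_Y + γ = g(x) - λ g(r(x, y))`.
Since `X` moves deterministically to `r(x, y)`, the `S_X`-marginal of `ν_{t+1}` is the image of
`ν_t` under `r`, so integrating against `ν_t` gives `α a_t + β b_t + γ = f_t - λ f_{t+1}` for
the expected stage payoffs `a_t`, `b_t` and `f_t = ∫ g(x) dν_t`. The discounted sum of the right-hand side telescopes to `f_0`, which vanishes
because `X` opens with `x₀`. -/

/-- The payoff `π` earned from the stream of expected stage payoffs `g`. -/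
noncomputable def discountedAverage (lam : ℝ) (g : ℕ → ℝ) : ℝ :=
  (1 - lam) * ∑' t, lam ^ t * g t

section DiscountedAverage

variable {lam : ℝ}

theorem summable_pow_mul_of_abs_le (hlam : |lam| < 1) {g : ℕ → ℝ} {D : ℝ}
    (hg : ∀ t, |g t| ≤ D) : Summable fun t => lam ^ t * g t := by
  refine Summable.of_norm_bounded
    ((summable_geometric_of_lt_one (abs_nonneg lam) hlam).mul_right D) fun t => ?_
  rw [Real.norm_eq_abs, abs_mul, abs_pow]
  exact mul_le_mul_of_nonneg_left (hg t) (pow_nonneg (abs_nonneg lam) t)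

theorem discountedAverage_add {a b : ℕ → ℝ} (ha : Summable fun t => lam ^ t * a t)
    (hb : Summable fun t => lam ^ t * b t) :
    discountedAverage lam (fun t => a t + b t) =
      discountedAverage lam a + discountedAverage lam b := by
  simp only [discountedAverage, mul_add, ha.tsum_add hb]

theorem discountedAverage_const_mul (c : ℝ) (a : ℕ → ℝ) :
    discountedAverage lam (fun t => c * a t) = c * discountedAverage lam a := by
  simp only [discountedAverage, mul_left_comm _ c, tsum_mul_left]

theorem discountedAverage_const (hlam : |lam| < 1) (c : ℝ) :
    discountedAverage lam (fun _ => c) = c := by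
  have hlam1 : 1 - lam ≠ 0 := sub_ne_zero.2 (ne_of_lt (abs_lt.1 hlam).2).symm
  rw [discountedAverage, tsum_mul_right, tsum_geometric_of_abs_lt_one hlam]
  field_simp

theorem discountedAverage_sub_mul_succ {f : ℕ → ℝ} (hf : Summable fun t => lam ^ t * f t) :
    discountedAverage lam (fun t => f t - lam * f (t + 1)) = (1 - lam) * f 0 := by
  have hshift : Summable fun t => lam ^ (t + 1) * f (t + 1) := (summable_nat_add_iff 1).2 hf
  have hsplit : ∀ t,
      lam ^ t * (f t - lam * f (t + 1)) = lam ^ t * f t - lam ^ (t + 1) * f (t + 1) :=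
    fun t => by ring
  rw [discountedAverage, tsum_congr hsplit, hf.tsum_sub hshift, hf.tsum_eq_zero_add]
  simp

theorem affine_discountedAverage_eq_zero (hlam : |lam| < 1) {a b f : ℕ → ℝ} {α β γ : ℝ}
    (ha : Summable fun t => lam ^ t * a t) (hb : Summable fun t => lam ^ t * b t)
    (hf : Summable fun t => lam ^ t * f t) (hf0 : f 0 = 0)
    (h : ∀ t, α * a t + β * b t + γ = f t - lam * f (t + 1)) :
    α * discountedAverage lam a + β * discountedAverage lam b + γ = 0 := by
  have ha' : Summable fun t => lam ^ t * (α * a t) := (ha.mul_left α).congr fun t => by ring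
  have hb' : Summable fun t => lam ^ t * (β * b t) := (hb.mul_left β).congr fun t => by ring
  calc α * discountedAverage lam a + β * discountedAverage lam b + γ
      = discountedAverage lam (fun t => α * a t + β * b t + γ) := by
        rw [discountedAverage_add (a := fun t => α * a t + β * b t) (b := fun _ => γ)
            ((ha'.add hb').congr fun t => (mul_add _ _ _).symm)
            (summable_pow_mul_of_abs_le hlam fun _ => le_refl |γ|),
          discountedAverage_add ha' hb', discountedAverage_const_mul, discountedAverage_const_mul,
          discountedAverage_const hlam]
    _ = discountedAverage lam (fun t => f t - lam * f (t + 1)) := by simp only [h]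
    _ = 0 := by rw [discountedAverage_sub_mul_succ hf, hf0, mul_zero]

end DiscountedAverage

section Measures

variable {Ω : Type*} [MeasurableSpace Ω]

theorem abs_integral_le_of_abs_le {μ : Measure Ω} [IsProbabilityMeasure μ] {u : Ω → ℝ} {D : ℝ}
    (hu : ∀ q, |u q| ≤ D) : |∫ q, u q ∂μ| ≤ D := by
  simpa using norm_integral_le_of_norm_le_const (μ := μ)
    (ae_of_all _ fun q => (Real.norm_eq_abs _).trans_le (hu q))

theorem integral_mul_add_mul_add_const {μ : Measure Ω} [IsProbabilityMeasure μ] {u v : Ω → ℝ}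
    (hu : Integrable u μ) (hv : Integrable v μ) (a b c : ℝ) :
    ∫ q, (a * u q + b * v q + c) ∂μ = a * ∫ q, u q ∂μ + b * ∫ q, v q ∂μ + c := by
  rw [integral_add (f := fun q => a * u q + b * v q) ((hu.const_mul a).add (hv.const_mul b))
      (integrable_const c),
    integral_add (hu.const_mul a) (hv.const_mul b), integral_const_mul, integral_const_mul,
    integral_const, probReal_univ, one_smul]

theorem summable_pow_mul_integral {lam : ℝ} (hlam : |lam| < 1) {ν : ℕ → Measure Ω}
    (hν : ∀ t, IsProbabilityMeasure (ν t)) {u : Ω → ℝ} {D : ℝ} (hu : ∀ q, |u q| ≤ D) :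
    Summable fun t => lam ^ t * ∫ q, u q ∂ν t :=
  summable_pow_mul_of_abs_le hlam fun t => abs_integral_le_of_abs_le (μ := ν t) hu

variable {α β : Type*} [MeasurableSpace α] [MeasurableSpace β]

theorem MeasureTheory.Measure.fst_eq_of_apply_prod_univ {μ : Measure (α × β)} {ρ : Measure α}
    (h : ∀ E, MeasurableSet E → μ (E ×ˢ Set.univ) = ρ E) : μ.fst = ρ := by
  ext E hE
  rw [Measure.fst_apply hE, ← Set.prod_univ, h E hE]

theorem MeasureTheory.Measure.fst_eq_map_of_apply_prod_univ {μ μ' : Measure (α × β)}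
    {r : α × β → α} (hr : Measurable r)
    (h : ∀ E, MeasurableSet E → μ' (E ×ˢ Set.univ) = ∫⁻ q, Measure.dirac (r q) E ∂μ) :
    μ'.fst = μ.map r := by
  refine Measure.fst_eq_of_apply_prod_univ fun E hE => ?_
  rw [h E hE, ← Measure.bind_dirac_eq_map μ hr,
    Measure.bind_apply (f := fun q => Measure.dirac (r q)) hE
      (Measure.measurable_dirac.comp hr).aemeasurable]

theorem integral_comp_fst_of_fst_eq_map {μ μ' : Measure (α × β)} {r : α × β → α}
    (hr : Measurable r) (hμ : μ'.fst = μ.map r) {g : α → ℝ} (hg : Measurable g) :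
    ∫ q, g q.1 ∂μ' = ∫ q, g (r q) ∂μ := by
  rw [← integral_map measurable_fst.aemeasurable hg.aestronglyMeasurable, ← Measure.fst, hμ,
    integral_map hr.aemeasurable hg.aestronglyMeasurable]

theorem integral_comp_fst_of_fst_eq_dirac {μ : Measure (α × β)} {x₀ : α}
    (hμ : μ.fst = Measure.dirac x₀) {g : α → ℝ} (hg : Measurable g) :
    ∫ q, g q.1 ∂μ = g x₀ := by
  rw [← integral_map measurable_fst.aemeasurable hg.aestronglyMeasurable, ← Measure.fst, hμ,
    integral_dirac' _ _ hg.stronglyMeasurable]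

theorem integral_affine_eq_sub_of_fst_eq_map {μ μ' : Measure (α × β)} [IsProbabilityMeasure μ]
    {r : α × β → α} (hr : Measurable r) (hμ : μ'.fst = μ.map r) {u v : α × β → ℝ}
    (hu : Integrable u μ) (hv : Integrable v μ) {g : α → ℝ} (hg : Measurable g) {D : ℝ}
    (hgb : ∀ x, |g x| ≤ D) {a b c lam : ℝ}
    (h : ∀ q, a * u q + b * v q + c = g q.1 - lam * g (r q)) :
    a * ∫ q, u q ∂μ + b * ∫ q, v q ∂μ + c = ∫ q, g q.1 ∂μ - lam * ∫ q, g q.1 ∂μ' := by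
  have hg1 : Integrable (fun q => g q.1) μ :=
    Integrable.of_bound (hg.comp measurable_fst).aestronglyMeasurable D
      (ae_of_all _ fun q => hgb q.1)
  have hgr : Integrable (fun q => g (r q)) μ :=
    Integrable.of_bound (hg.comp hr).aestronglyMeasurable D (ae_of_all _ fun q => hgb (r q))
  calc a * ∫ q, u q ∂μ + b * ∫ q, v q ∂μ + c
      = ∫ q, (a * u q + b * v q + c) ∂μ := (integral_mul_add_mul_add_const hu hv a b c).symm
    _ = ∫ q, (g q.1 - lam * g (r q)) ∂μ := integral_congr_ae (ae_of_all _ h)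
    _ = ∫ q, g q.1 ∂μ - lam * ∫ q, g q.1 ∂μ' := by
      rw [integral_sub hg1 (hgr.const_mul lam), integral_const_mul,
        integral_comp_fst_of_fst_eq_map hr hμ hg]

end Measures

theorem deterministic_autocratic_strategies_general
    {SX SY : Type*} [MeasurableSpace SX]
    [MeasurableSpace SY]
    (uX uY : SX × SY → ℝ) (huXm : Measurable uX) (huYm : Measurable uY)
    (C : ℝ) (huXb : ∀ q, |uX q| ≤ C) (huYb : ∀ q, |uY q| ≤ C)
    (lam : ℝ) (hlam : lam ∈ Set.Ioo (0 : ℝ) 1)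
    (α β γ : ℝ)
    (r : SX × SY → SX) (hr : Measurable r) (x₀ : SX)
    (ψ : SX → ℝ) (hψm : Measurable ψ) (Cψ : ℝ) (hψb : ∀ s, |ψ s| ≤ Cψ)
    (hPD : ∀ x y, α * uX (x, y) + β * uY (x, y) + γ =
      ψ x - lam * ψ (r (x, y)) - (1 - lam) * ψ x₀)
    (σX : Kernel (SX × SY) SX) (hσX : ∀ q, σX q = Measure.dirac (r q))
    (σ0 : Measure SX) (hσ0 : σ0 = Measure.dirac x₀)
    (ν : ℕ → Measure (SX × SY)) (hνp : ∀ t, IsProbabilityMeasure (ν t))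
    (hν0 : ∀ E : Set SX, MeasurableSet E → ν 0 (E ×ˢ Set.univ) = σ0 E)
    (hνsucc : ∀ t : ℕ, ∀ E : Set SX, MeasurableSet E →
      ν (t + 1) (E ×ˢ Set.univ) = ∫⁻ q, σX q E ∂ ν t) :
    α * ((1 - lam) * ∑' t : ℕ, lam ^ t * ∫ q, uX q ∂ ν t)
      + β * ((1 - lam) * ∑' t : ℕ, lam ^ t * ∫ q, uY q ∂ ν t) + γ = 0 := by
  have hlam' : |lam| < 1 := abs_lt.2 ⟨by linarith [hlam.1], hlam.2⟩
  set g : SX → ℝ := fun x => ψ x - ψ x₀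
  have hg : Measurable g := hψm.sub_const _
  have hgb : ∀ x, |g x| ≤ 2 * Cψ := fun x =>
    (abs_sub _ _).trans (by linarith [hψb x, hψb x₀])
  have hint : ∀ t {u : SX × SY → ℝ}, Measurable u → (∀ q, |u q| ≤ C) → Integrable u (ν t) :=
    fun t _ hu hC => Integrable.of_bound hu.aestronglyMeasurable C (ae_of_all _ hC)
  have hfst0 : (ν 0).fst = Measure.dirac x₀ :=
    Measure.fst_eq_of_apply_prod_univ (hσ0 ▸ hν0)
  have hfst : ∀ t, (ν (t + 1)).fst = (ν t).map r := fun t =>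
    Measure.fst_eq_map_of_apply_prod_univ hr (by simpa only [hσX] using hνsucc t)
  refine affine_discountedAverage_eq_zero hlam' (summable_pow_mul_integral hlam' hνp huXb)
    (summable_pow_mul_integral hlam' hνp huYb)
    (summable_pow_mul_integral hlam' hνp fun q => hgb q.1) ?_ fun t => ?_
  · exact (integral_comp_fst_of_fst_eq_dirac hfst0 hg).trans (sub_self _)
  · refine integral_affine_eq_sub_of_fst_eq_map hr (hfst t) (hint t huXm huXb) (hint t huYm huYb)
      hg hgb fun q => ?_
    simp only [g]
    linarith [hPD q.1 q.2]

/-- **Deterministic autocratic strategies.** If a measurable reaction function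
`r : S_X × S_Y → S_X`, initial action `x₀`, and bounded measurable `ψ` satisfy
`α·u_X(x,y) + β·u_Y(x,y) + γ = ψ(x) − lam·ψ(r(x,y)) − (1−lam)·ψ(x₀)` for all
`x, y`, then the deterministic memory-one strategy `σX[x,y] = δ_{r(x,y)}` with
initial action `δ_{x₀}` enforces `α·π_X + β·π_Y + γ = 0` against every play
sequence compatible with it. -/
theorem deterministic_autocratic_strategies
    {SX SY : Type*} [MeasurableSpace SX] [MeasurableSingletonClass SX]
    [MeasurableSpace SY]
    (uX uY : SX × SY → ℝ) (huXm : Measurable uX) (huYm : Measurable uY)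
    (C : ℝ) (huXb : ∀ q, |uX q| ≤ C) (huYb : ∀ q, |uY q| ≤ C)
    (lam : ℝ) (hlam : lam ∈ Set.Ioo (0 : ℝ) 1)
    (α β γ : ℝ)
    (r : SX × SY → SX) (hr : Measurable r) (x₀ : SX)
    (ψ : SX → ℝ) (hψm : Measurable ψ) (Cψ : ℝ) (hψb : ∀ s, |ψ s| ≤ Cψ)
    (hPD : ∀ x y, α * uX (x, y) + β * uY (x, y) + γ =
      ψ x - lam * ψ (r (x, y)) - (1 - lam) * ψ x₀)
    (σX : Kernel (SX × SY) SX) (hσX : ∀ q, σX q = Measure.dirac (r q))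
    (σ0 : Measure SX) (hσ0 : σ0 = Measure.dirac x₀)
    (ν : ℕ → Measure (SX × SY)) (hνp : ∀ t, IsProbabilityMeasure (ν t))
    (hν0 : ∀ E : Set SX, MeasurableSet E → ν 0 (E ×ˢ Set.univ) = σ0 E)
    (hνsucc : ∀ t : ℕ, ∀ E : Set SX, MeasurableSet E →
      ν (t + 1) (E ×ˢ Set.univ) = ∫⁻ q, σX q E ∂ ν t) :
    α * ((1 - lam) * ∑' t : ℕ, lam ^ t * ∫ q, uX q ∂ ν t)
      + β * ((1 - lam) * ∑' t : ℕ, lam ^ t * ∫ q, uY q ∂ ν t) + γ = 0 :=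
  deterministic_autocratic_strategies_general uX uY huXm huYm C huXb huYb lam hlam α β γ r hr x₀ ψ
    hψm Cψ hψb hPD σX hσX σ0 hσ0 ν hνp hν0 hνsucc
end

section
/- Deterministic extortionate strategies in the continuous Donation Game: In the continuous Donation Game, assume additionally that b and c are continuous and that s ↦ χ·b(s) + c(s) is strictly increasing, so that ψ(s) := −χ·b(s) − c(s) is a continuous strictly decreasing bijection from [0,K] onto [−χ·b(K) − c(K), 0]. Let χ ≥ 1, 0 ≤ κ ≤ b(K) − c(K), let λ ∈ (0,1) satisfy λ ≥ (b(K) + χ·c(K)) / (χ·b(K) + c(K)), and let x_0 ∈ [0,K] satisfy ((χ−1)κ − λ(χ·b(K)+c(K)) + (b(K)+χ·c(K))) / (1−λ) ≤ χ·b(x_0) + c(x_0) ≤ (χ−1)κ / (1−λ). Then for every y ∈ [0,K] the value w(y) := (−b(y) − χ·c(y) − (χ−1)κ − (1−λ)·ψ(x_0)) / λ lies in [−χ·b(K) − c(K), 0], so the reaction function r(x,y) := ψ^{−1}(w(y)) is well defined, and the deterministic memory-one strategy σ_X[x,y] = δ_{r(x,y)} with initial action σ_X^0 = δ_{x_0}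 satisfies: for every play sequence (ν_t)_{t≥0} compatible with (σ_X^0, σ_X), π_X − κ = χ·(π_Y − κ). -/
/-!
Write `ψ = -χ b - c`. The reaction rule says `λ ψ(x_{t+1}) = -b(y_t) - χ c(y_t) - D` with
`D = (χ - 1) κ + (1 - λ) ψ(x₀)`, so the stage payoff `u_X - χ u_Y` equals
`ψ(x_t) - λ ψ(x_{t+1}) - D` along every play. Taking expectations, the discounted sum telescopes
to `ψ(x₀) - D / (1 - λ)`; after normalisation this is `(1 - χ) κ`, i.e. `π_X - κ = χ (π_Y - κ)`.
The bounds on `x₀` place `w(y)` in `[ψ(K), ψ(0)]`, so the intermediate value theorem gives the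
reaction function.
-/

open MeasureTheory ProbabilityTheory Set

theorem summable_pow_mul_of_norm_le {lam C : ℝ} (hlam₀ : 0 ≤ lam) (hlam₁ : lam < 1)
    {u : ℕ → ℝ} (hu : ∀ t, ‖u t‖ ≤ C) : Summable fun t => lam ^ t * u t := by
  refine ((summable_geometric_of_lt_one hlam₀ hlam₁).mul_right C).of_norm_bounded fun t => ?_
  rw [norm_mul, norm_pow, Real.norm_of_nonneg hlam₀]
  exact mul_le_mul_of_nonneg_left (hu t) (pow_nonneg hlam₀ t)

theorem hasSum_pow_mul_sub_mul_succ {lam : ℝ} {A : ℕ → ℝ}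
    (hA : Summable fun t => lam ^ t * A t) :
    HasSum (fun t => lam ^ t * (A t - lam * A (t + 1))) (A 0) := by
  have h := hA.hasSum.sub ((hasSum_nat_add_iff' 1).2 hA.hasSum)
  rw [Finset.sum_range_one, pow_zero, one_mul, sub_sub_cancel] at h
  exact h.congr_fun fun t => by ring

section Discounted

variable {γ : Type*} [MeasurableSpace γ]

noncomputable def discountedPayoff (lam : ℝ) (ν : ℕ → Measure γ) (f : γ → ℝ) : ℝ :=
  (1 - lam) * ∑' t, lam ^ t * ∫ q, f q ∂ν t

variable {ν : ℕ → Measure γ} [∀ t, IsProbabilityMeasure (ν t)] {lam : ℝ}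

theorem norm_integral_le_of_forall_norm_le {μ : Measure γ} [IsProbabilityMeasure μ]
    {f : γ → ℝ} {C : ℝ} (hC : ∀ q, ‖f q‖ ≤ C) : ‖∫ q, f q ∂μ‖ ≤ C := by
  simpa using norm_integral_le_of_norm_le_const (μ := μ) (.of_forall hC)

theorem summable_pow_mul_integral_s14 (hlam₀ : 0 ≤ lam) (hlam₁ : lam < 1) {f : γ → ℝ} {C : ℝ}
    (hC : ∀ q, ‖f q‖ ≤ C) : Summable fun t => lam ^ t * ∫ q, f q ∂ν t :=
  summable_pow_mul_of_norm_le hlam₀ hlam₁ fun _ => norm_integral_le_of_forall_norm_le hC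

theorem discountedPayoff_sub_mul (hlam₀ : 0 ≤ lam) (hlam₁ : lam < 1) {f g : γ → ℝ}
    {Cf Cg : ℝ} (hf : Measurable f) (hg : Measurable g) (hfC : ∀ q, ‖f q‖ ≤ Cf)
    (hgC : ∀ q, ‖g q‖ ≤ Cg) (χ : ℝ) :
    discountedPayoff lam ν (fun q => f q - χ * g q)
      = discountedPayoff lam ν f - χ * discountedPayoff lam ν g := by
  have hstage : ∀ t, ∫ q, (f q - χ * g q) ∂ν t = ∫ q, f q ∂ν t - χ * ∫ q, g q ∂ν t := fun t => by
    rw [integral_sub (Integrable.of_bound hf.aestronglyMeasurable Cf (.of_forall hfC))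
      ((Integrable.of_bound hg.aestronglyMeasurable Cg (.of_forall hgC)).const_mul χ),
      integral_const_mul]
  have hsf := summable_pow_mul_integral_s14 (ν := ν) hlam₀ hlam₁ hfC
  have hsg := (summable_pow_mul_integral_s14 (ν := ν) hlam₀ hlam₁ hgC).mul_left χ
  simp only [discountedPayoff, hstage, mul_sub, mul_left_comm (lam ^ _) χ]
  rw [hsf.tsum_sub hsg, tsum_mul_left]
  ring

end Discounted

section Play

variable {α β : Type*} [MeasurableSpace α] [MeasurableSpace β]
  {ν : ℕ → Measure (α × β)}

theorem map_fst_eq_of_forall_prod_univ {μ : Measure (α × β)} {ρ : Measure α}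
    (h : ∀ E, MeasurableSet E → μ (E ×ˢ univ) = ρ E) :
    μ.map Prod.fst = ρ := by
  ext E hE
  rw [Measure.map_apply measurable_fst hE, ← prod_univ, h E hE]

theorem integral_comp_fst_succ {r : α × β → α} (hr : Measurable r)
    (hsucc : ∀ t, (ν (t + 1)).map Prod.fst = (ν t).map r) {ψ : α → ℝ} (hψ : Measurable ψ)
    (t : ℕ) : ∫ q, ψ q.1 ∂ν (t + 1) = ∫ q, ψ (r q) ∂ν t := by
  rw [← integral_map measurable_fst.aemeasurable hψ.aestronglyMeasurable, hsucc,
    integral_map hr.aemeasurable hψ.aestronglyMeasurable]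

theorem map_fst_succ_eq_map {r : α × β → α} (hr : Measurable r) {σ : Kernel (α × β) α}
    (hσ : ∀ q, σ q = Measure.dirac (r q))
    (hstep : ∀ t E, MeasurableSet E → ν (t + 1) (E ×ˢ univ) = ∫⁻ q, σ q E ∂ν t) (t : ℕ) :
    (ν (t + 1)).map Prod.fst = (ν t).map r :=
  map_fst_eq_of_forall_prod_univ fun E hE => by
    rw [hstep t E hE, ← Measure.bind_dirac_eq_map _ hr,
      Measure.bind_apply hE (f := fun q => Measure.dirac (r q))
        (Measure.measurable_dirac.comp hr).aemeasurable]
    simp only [hσ]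

variable [∀ t, IsProbabilityMeasure (ν t)]

theorem discountedPayoff_sub_mul_comp_sub {lam : ℝ} (hlam₀ : 0 ≤ lam) (hlam₁ : lam < 1)
    {x₀ : α} {r : α × β → α} (hr : Measurable r)
    (h₀ : (ν 0).map Prod.fst = Measure.dirac x₀)
    (hsucc : ∀ t, (ν (t + 1)).map Prod.fst = (ν t).map r)
    {ψ : α → ℝ} {C : ℝ} (hψ : Measurable ψ) (hψC : ∀ x, ‖ψ x‖ ≤ C) (D : ℝ) :
    discountedPayoff lam ν (fun q => ψ q.1 - lam * ψ (r q) - D) = (1 - lam) * ψ x₀ - D := by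
  set A : ℕ → ℝ := fun t => ∫ q, ψ q.1 ∂ν t
  have hA₀ : A 0 = ψ x₀ := by
    simp only [A]
    rw [← integral_map measurable_fst.aemeasurable hψ.aestronglyMeasurable, h₀,
      integral_dirac' _ _ hψ.stronglyMeasurable]
  have hstage : ∀ t, ∫ q, (ψ q.1 - lam * ψ (r q) - D) ∂ν t = A t - lam * A (t + 1) - D := by
    intro t
    have hψ₁ : Integrable (fun q => ψ q.1) (ν t) :=
      .of_bound (hψ.comp measurable_fst).aestronglyMeasurable C (.of_forall fun q => hψC q.1)
    have hψr : Integrable (fun q => ψ (r q)) (ν t) :=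
      .of_bound (hψ.comp hr).aestronglyMeasurable C (.of_forall fun q => hψC (r q))
    have hψ₁r : Integrable (fun q => ψ q.1 - lam * ψ (r q)) (ν t) := hψ₁.sub (hψr.const_mul lam)
    rw [integral_sub hψ₁r (integrable_const D),
      integral_sub hψ₁ (hψr.const_mul lam), integral_const_mul, integral_const,
      ← integral_comp_fst_succ hr hsucc hψ]
    simp [A]
  have hA : Summable fun t => lam ^ t * A t :=
    summable_pow_mul_integral_s14 hlam₀ hlam₁ fun q => hψC q.1
  have hsum := (hasSum_pow_mul_sub_mul_succ hA).sub
    ((hasSum_geometric_of_lt_one hlam₀ hlam₁).mul_right D)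
  simp only [← mul_sub] at hsum
  simp only [discountedPayoff, hstage, hsum.tsum_eq, hA₀]
  field_simp [(sub_pos.2 hlam₁).ne']

end Play

theorem discountedPayoff_sub_mul_of_reaction {α : Type*} [TopologicalSpace α] [CompactSpace α]
    [SecondCountableTopology α] [MeasurableSpace α] [BorelSpace α]
    {ν : ℕ → Measure (α × α)} [∀ t, IsProbabilityMeasure (ν t)] {b c : α → ℝ}
    (hb : Continuous b) (hc : Continuous c) {χ lam D : ℝ} (hlam₀ : 0 ≤ lam) (hlam₁ : lam < 1)
    {x₀ : α} {r : α × α → α} (hr : Measurable r) (h₀ : (ν 0).map Prod.fst = Measure.dirac x₀)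
    (hsucc : ∀ t, (ν (t + 1)).map Prod.fst = (ν t).map r)
    (hreact : ∀ q, lam * (-(χ * b (r q)) - c (r q)) = -(b q.2) - χ * c q.2 - D) :
    discountedPayoff lam ν (fun q => b q.2 - c q.1)
        - χ * discountedPayoff lam ν (fun q => b q.1 - c q.2)
      = (1 - lam) * (-(χ * b x₀) - c x₀) - D := by
  have hψ : Continuous fun x => -(χ * b x) - c x := by fun_prop
  have huX : Continuous fun q : α × α => b q.2 - c q.1 := by fun_prop
  have huY : Continuous fun q : α × α => b q.1 - c q.2 := by fun_prop
  obtain ⟨Cψ, hCψ⟩ := (HasCompactSupport.of_compactSpace _).exists_bound_of_continuous hψ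
  obtain ⟨CX, hCX⟩ := (HasCompactSupport.of_compactSpace _).exists_bound_of_continuous huX
  obtain ⟨CY, hCY⟩ := (HasCompactSupport.of_compactSpace _).exists_bound_of_continuous huY
  have hpay : (fun q : α × α => (b q.2 - c q.1) - χ * (b q.1 - c q.2))
      = fun q => (-(χ * b q.1) - c q.1) - lam * (-(χ * b (r q)) - c (r q)) - D := by
    ext q; rw [hreact]; ring
  rw [← discountedPayoff_sub_mul hlam₀ hlam₁ huX.measurable huY.measurable hCX hCY, hpay,
    discountedPayoff_sub_mul_comp_sub hlam₀ hlam₁ hr h₀ hsucc hψ.measurable hCψ]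

theorem reaction_target_mem_Icc {β : Type*} [Preorder β] {b c : β → ℝ} (hb : Monotone b)
    (hc : Monotone c) {bot top : β} (hb₀ : b bot = 0) (hc₀ : c bot = 0) {χ κ lam : ℝ}
    (hχ : 0 ≤ χ) (hlam₀ : 0 < lam) (hlam₁ : lam < 1) {x₀ : β}
    (hx₀l : ((χ - 1) * κ - lam * (χ * b top + c top) + (b top + χ * c top))
        / (1 - lam) ≤ χ * b x₀ + c x₀)
    (hx₀u : χ * b x₀ + c x₀ ≤ (χ - 1) * κ / (1 - lam)) {y : β} (hy : y ∈ Icc bot top) :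
    (-(b y) - χ * c y - (χ - 1) * κ - (1 - lam) * (-(χ * b x₀) - c x₀)) / lam
      ∈ Icc (-(χ * b top + c top)) 0 := by
  have h1lam : 0 < 1 - lam := sub_pos.2 hlam₁
  rw [div_le_iff₀ h1lam] at hx₀l
  rw [le_div_iff₀ h1lam] at hx₀u
  have hby : 0 ≤ b y := hb₀ ▸ hb hy.1
  have hcy : 0 ≤ c y := hc₀ ▸ hc hy.1
  have hcyt : χ * c y ≤ χ * c top := mul_le_mul_of_nonneg_left (hc hy.2) hχ
  refine ⟨(le_div_iff₀ hlam₀).2 ?_, div_nonpos_of_nonpos_of_nonneg ?_ hlam₀.le⟩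
  · linarith [hb hy.2]
  · linarith [mul_nonneg hχ hcy]

theorem donation_deterministic_extortion_general
    (K : ℝ)
    (b c : Set.Icc (0 : ℝ) K → ℝ) (hbm : Monotone b) (hcm : Monotone c)
    (hbcont : Continuous b) (hccont : Continuous c)
    (zero top : Set.Icc (0 : ℝ) K) (hzero : (zero : ℝ) = 0) (htop : (top : ℝ) = K)
    (hb0 : b zero = 0) (hc0 : c zero = 0)
    (χ : ℝ) (hχ : 1 ≤ χ)
    (κ : ℝ)
    (lam : ℝ) (hlam : lam ∈ Set.Ioo (0 : ℝ) 1)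
    (x₀ : Set.Icc (0 : ℝ) K)
    (hx₀l : ((χ - 1) * κ - lam * (χ * b top + c top) + (b top + χ * c top))
        / (1 - lam) ≤ χ * b x₀ + c x₀)
    (hx₀u : χ * b x₀ + c x₀ ≤ (χ - 1) * κ / (1 - lam))
    (w : Set.Icc (0 : ℝ) K → ℝ)
    (hw : ∀ y, w y = (-(b y) - χ * c y - (χ - 1) * κ
        - (1 - lam) * (-(χ * b x₀) - c x₀)) / lam) :
    (∀ y, w y ∈ Set.Icc (-(χ * b top + c top)) 0) ∧
    (∃ r : Set.Icc (0 : ℝ) K × Set.Icc (0 : ℝ) K → Set.Icc (0 : ℝ) K,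
      ∀ q, -(χ * b (r q)) - c (r q) = w q.2) ∧
    (∀ r : Set.Icc (0 : ℝ) K × Set.Icc (0 : ℝ) K → Set.Icc (0 : ℝ) K,
      Measurable r → (∀ q, -(χ * b (r q)) - c (r q) = w q.2) →
      ∀ σX : Kernel (Set.Icc (0 : ℝ) K × Set.Icc (0 : ℝ) K) (Set.Icc (0 : ℝ) K),
        (∀ q, σX q = Measure.dirac (r q)) →
      ∀ ν : ℕ → Measure (Set.Icc (0 : ℝ) K × Set.Icc (0 : ℝ) K),
        (∀ t, IsProbabilityMeasure (ν t)) →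
        (∀ E : Set (Set.Icc (0 : ℝ) K), MeasurableSet E →
          ν 0 (E ×ˢ Set.univ) = Measure.dirac x₀ E) →
        (∀ t : ℕ, ∀ E : Set (Set.Icc (0 : ℝ) K), MeasurableSet E →
          ν (t + 1) (E ×ˢ Set.univ) = ∫⁻ q, σX q E ∂ ν t) →
        ((1 - lam) * ∑' t : ℕ, lam ^ t * ∫ q, (b q.2 - c q.1) ∂ ν t) - κ
          = χ * (((1 - lam) * ∑' t : ℕ, lam ^ t * ∫ q, (b q.1 - c q.2) ∂ ν t) - κ)) := by
  obtain ⟨hlam₀, hlam₁⟩ := hlam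
  have hbot : ∀ y : Set.Icc (0 : ℝ) K, y ∈ Icc zero top := fun y =>
    ⟨by simpa [← Subtype.coe_le_coe, hzero] using y.2.1,
      by simpa [← Subtype.coe_le_coe, htop] using y.2.2⟩
  have hwmem : ∀ y, w y ∈ Icc (-(χ * b top + c top)) 0 := fun y => by
    rw [hw y]
    exact reaction_target_mem_Icc hbm hcm hb0 hc0 (by linarith) hlam₀ hlam₁ hx₀l hx₀u (hbot y)
  set ψ : Set.Icc (0 : ℝ) K → ℝ := fun s => -(χ * b s) - c s
  have hψ : Continuous ψ := by fun_prop
  refine ⟨hwmem, ?_, ?_⟩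
  · have := Subtype.preconnectedSpace (isPreconnected_Icc (a := (0 : ℝ)) (b := K))
    have hψtop : ψ top = -(χ * b top + c top) := by ring
    have hψzero : ψ zero = 0 := by simp [ψ, hb0, hc0]
    have hsurj : ∀ y, ∃ s, ψ s = w y := fun y =>
      intermediate_value_univ top zero hψ (by rw [hψtop, hψzero]; exact hwmem y)
    exact ⟨fun q => (hsurj q.2).choose, fun q => (hsurj q.2).choose_spec⟩
  intro r hr hrw σX hσX ν hν hν₀ hνsucc
  have := hν
  have hextort := discountedPayoff_sub_mul_of_reaction hbcont hccont hlam₀.le hlam₁ hr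
    (map_fst_eq_of_forall_prod_univ hν₀) (map_fst_succ_eq_map hr hσX hνsucc)
    (D := (χ - 1) * κ + (1 - lam) * ψ x₀) fun q => by
      rw [hrw, hw]
      field_simp
      ring
  change discountedPayoff lam ν _ - κ = χ * (discountedPayoff lam ν _ - κ)
  linarith

/-- **Deterministic extortionate strategies in the continuous Donation Game.**
Assume `b, c` are continuous and `s ↦ χ·b(s) + c(s)` is strictly increasing (so that
`ψ(s) = −χ·b(s) − c(s)` is a continuous strictly decreasing bijection onto
`[−χ·b(K) − c(K), 0]`). For `χ ≥ 1`, `0 ≤ κ ≤ b(K) − c(K)`,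
`lam ≥ (b(K)+χc(K))/(χb(K)+c(K))`, and a feasible initial action `x₀`, the value
`w(y) = (−b(y) − χ·c(y) − (χ−1)κ − (1−lam)·ψ(x₀))/lam` lies in
`[−χ·b(K) − c(K), 0]` for every `y`, the reaction function `r = ψ⁻¹ ∘ w` is well
defined (it exists and is characterized by `ψ(r(x,y)) = w(y)`), and the
deterministic strategy `σX[x,y] = δ_{r(x,y)}` with initial action `δ_{x₀}`
enforces `π_X − κ = χ(π_Y − κ)`. -/
theorem donation_deterministic_extortion
    (K : ℝ) (hK : 0 < K)
    (b c : Set.Icc (0 : ℝ) K → ℝ) (hbm : Monotone b) (hcm : Monotone c)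
    (hbmeas : Measurable b) (hcmeas : Measurable c)
    (hbcont : Continuous b) (hccont : Continuous c)
    (zero top : Set.Icc (0 : ℝ) K) (hzero : (zero : ℝ) = 0) (htop : (top : ℝ) = K)
    (hb0 : b zero = 0) (hc0 : c zero = 0)
    (hbc : ∀ s : Set.Icc (0 : ℝ) K, 0 < (s : ℝ) → c s < b s)
    (χ : ℝ) (hχ : 1 ≤ χ)
    (hsm : StrictMono (fun s : Set.Icc (0 : ℝ) K => χ * b s + c s))
    (κ : ℝ) (hκ : 0 ≤ κ ∧ κ ≤ b top - c top)
    (lam : ℝ) (hlam : lam ∈ Set.Ioo (0 : ℝ) 1)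
    (hlam' : (b top + χ * c top) / (χ * b top + c top) ≤ lam)
    (x₀ : Set.Icc (0 : ℝ) K)
    (hx₀l : ((χ - 1) * κ - lam * (χ * b top + c top) + (b top + χ * c top))
        / (1 - lam) ≤ χ * b x₀ + c x₀)
    (hx₀u : χ * b x₀ + c x₀ ≤ (χ - 1) * κ / (1 - lam))
    (w : Set.Icc (0 : ℝ) K → ℝ)
    (hw : ∀ y, w y = (-(b y) - χ * c y - (χ - 1) * κ
        - (1 - lam) * (-(χ * b x₀) - c x₀)) / lam) :
    (∀ y, w y ∈ Set.Icc (-(χ * b top + c top)) 0) ∧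
    (∃ r : Set.Icc (0 : ℝ) K × Set.Icc (0 : ℝ) K → Set.Icc (0 : ℝ) K,
      ∀ q, -(χ * b (r q)) - c (r q) = w q.2) ∧
    (∀ r : Set.Icc (0 : ℝ) K × Set.Icc (0 : ℝ) K → Set.Icc (0 : ℝ) K,
      Measurable r → (∀ q, -(χ * b (r q)) - c (r q) = w q.2) →
      ∀ σX : Kernel (Set.Icc (0 : ℝ) K × Set.Icc (0 : ℝ) K) (Set.Icc (0 : ℝ) K),
        (∀ q, σX q = Measure.dirac (r q)) →
      ∀ ν : ℕ → Measure (Set.Icc (0 : ℝ) K × Set.Icc (0 : ℝ) K),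
        (∀ t, IsProbabilityMeasure (ν t)) →
        (∀ E : Set (Set.Icc (0 : ℝ) K), MeasurableSet E →
          ν 0 (E ×ˢ Set.univ) = Measure.dirac x₀ E) →
        (∀ t : ℕ, ∀ E : Set (Set.Icc (0 : ℝ) K), MeasurableSet E →
          ν (t + 1) (E ×ˢ Set.univ) = ∫⁻ q, σX q E ∂ ν t) →
        ((1 - lam) * ∑' t : ℕ, lam ^ t * ∫ q, (b q.2 - c q.1) ∂ ν t) - κ
          = χ * (((1 - lam) * ∑' t : ℕ, lam ^ t * ∫ q, (b q.1 - c q.2) ∂ ν t) - κ)) :=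
  donation_deterministic_extortion_general K b c hbm hcm hbcont hccont zero top hzero htop hb0 hc0 χ
    hχ κ lam hlam x₀ hx₀l hx₀u w hw
end
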